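/- Uniform upper tail property for the non-uniform hypergraph adjacency matrix: let A be as in the context. Then for any reals a, t > 0 and any symmetric matrix Q ∈ ℝ^{n×n} with Q_{ij} ∈ [0, a] for all i, j, setting μ := Σ_{i,j=1}^n Q_{ij}·EA_{ij} and σ̃² := Σ_{i,j=1}^n Q_{ij}²·EA_{ij}, if σ̃² > 0 then ℙ( Σ_{i,j=1}^n Q_{ij} A_{ij} ≥ μ + t ) ≤ exp( − (σ̃² / (M(M−1)·a²)) · h( a·t / σ̃² ) ), where h(x) := (1+x)·log(1+x) − x. That is, A satisfies UUTP(c₀, γ₀) with c₀ = 1/(M(M−1)) and γ₀ = 0. -/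

import Mathlib

/-!
Grouping the quadratic form by hyperedges gives `∑ Q_ij A_ij = ∑_e w_e T_e` with
`w_e = ∑_{i ≠ j ∈ e} Q_ij`, a sum of independent weighted Bernoulli variables. A hyperedge has
at most `M(M-1)` ordered pairs, so `w_e ≤ M(M-1)a` and, by Cauchy–Schwarz,
`w_e² ≤ M(M-1) ∑_{i ≠ j ∈ e} Q_ij²`; Bennett's inequality with range `b = M(M-1)a` and variance
proxy `M(M-1)σ̃²` is then exactly the claimed bound. Bennett's inequality itself is the Chernoff
bound at `θ = log(1 + bt/V)/b`, once each moment generating function is controlled through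
`e^{sz} - 1 - sz ≤ s²(e^z - 1 - z)` for `s ∈ [0, 1]`, `z ≥ 0`.
-/

open MeasureTheory

/-- The adjacency matrix of the random non-uniform hypergraph with edge indicators `T`. -/
noncomputable def adjMatrix (n M : ℕ) {Ω : Type*} (T : Finset (Fin n) → Ω → Bool) (ω : Ω) :
    Matrix (Fin n) (Fin n) ℝ :=
  Matrix.of fun i j => if i = j then 0 else
    ∑ m ∈ Finset.Icc 2 M, ∑ e ∈ Finset.univ.filter
      (fun e : Finset (Fin n) => e.card = m ∧ i ∈ e ∧ j ∈ e),
        (if T e ω then (1 : ℝ) else 0)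

/-- The entrywise expectation of the adjacency matrix, for edge probabilities `p`. -/
noncomputable def expAdj (n M : ℕ) (p : Finset (Fin n) → ℝ) : Matrix (Fin n) (Fin n) ℝ :=
  Matrix.of fun i j => if i = j then 0 else
    ∑ m ∈ Finset.Icc 2 M, ∑ e ∈ Finset.univ.filter
      (fun e : Finset (Fin n) => e.card = m ∧ i ∈ e ∧ j ∈ e), p e

/-- The function `h(x) = (1+x)·log(1+x) - x` from Bennett's inequality. -/
noncomputable def bennettH (x : ℝ) : ℝ := (1 + x) * Real.log (1 + x) - x

open ProbabilityTheory Finset Real Nat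

lemma Real.hasSum_exp_sub_one_sub (x : ℝ) :
    HasSum (fun k : ℕ => x ^ (k + 2) / (k + 2)!) (exp x - 1 - x) := by
  have h := (hasSum_nat_add_iff' 2).2 (NormedSpace.expSeries_div_hasSum_exp x)
  rw [← Real.exp_eq_exp_ℝ] at h
  simpa [sum_range_succ, sub_sub] using h

lemma Real.exp_mul_sub_one_sub_le {s z : ℝ} (hs₀ : 0 ≤ s) (hs₁ : s ≤ 1) (hz : 0 ≤ z) :
    exp (s * z) - 1 - s * z ≤ s ^ 2 * (exp z - 1 - z) := by
  refine hasSum_le (fun k => ?_) (hasSum_exp_sub_one_sub (s * z))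
    ((hasSum_exp_sub_one_sub z).mul_left (s ^ 2))
  calc (s * z) ^ (k + 2) / (k + 2)! = s ^ k * (s ^ 2 * (z ^ (k + 2) / (k + 2)!)) := by ring
    _ ≤ s ^ 2 * (z ^ (k + 2) / (k + 2)!) :=
      mul_le_of_le_one_left (by positivity) (pow_le_one₀ hs₀ hs₁)

section Bennett

variable {Ω : Type*} [MeasurableSpace Ω] {μ : Measure Ω} [IsProbabilityMeasure μ]

lemma mgf_mul_indicator_bool {B : Ω → Bool} (hB : Measurable B) (w θ : ℝ) :
    mgf (fun ω => w * if B ω then 1 else 0) μ θ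
      = 1 + μ.real {ω | B ω = true} * (exp (θ * w) - 1) := by
  have hA : MeasurableSet {ω | B ω = true} := hB (measurableSet_singleton true)
  have hexp : (fun ω => exp (θ * (w * if B ω then 1 else 0)))
      = fun ω => {ω | B ω = true}.indicator (fun _ => exp (θ * w) - 1) ω + 1 := by
    funext ω
    by_cases h : B ω <;> simp [h]
  rw [mgf, hexp, integral_add ((integrable_const _).indicator hA) (integrable_const 1),
    integral_indicator_const _ hA, integral_const]
  simp only [smul_eq_mul, probReal_univ, mul_one]
  ring

lemma mgf_mul_indicator_bool_le {B : Ω → Bool} (hB : Measurable B) {w b θ : ℝ} (hb : 0 < b)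
    (hw₀ : 0 ≤ w) (hwb : w ≤ b) (hθ : 0 ≤ θ) :
    mgf (fun ω => w * if B ω then 1 else 0) μ θ ≤
      exp (μ.real {ω | B ω = true} * (θ * w + (w / b) ^ 2 * (exp (θ * b) - 1 - θ * b))) := by
  rw [mgf_mul_indicator_bool hB]
  have hθw : θ * w = w / b * (θ * b) := by field_simp
  have hquad : exp (θ * w) - 1 - θ * w ≤ (w / b) ^ 2 * (exp (θ * b) - 1 - θ * b) := by
    rw [hθw]
    exact exp_mul_sub_one_sub_le (by positivity) ((div_le_one hb).2 hwb) (by positivity)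
  calc 1 + μ.real {ω | B ω = true} * (exp (θ * w) - 1)
      ≤ exp (μ.real {ω | B ω = true} * (exp (θ * w) - 1)) := by
        linarith [add_one_le_exp (μ.real {ω | B ω = true} * (exp (θ * w) - 1))]
    _ ≤ _ := by gcongr; linarith

variable {ι : Type*} {T : ι → Ω → Bool} {p w : ι → ℝ} {b t : ℝ}

lemma measureReal_sum_ge_le_exp (hT : ∀ i, Measurable (T i)) (hindep : iIndepFun T μ)
    (hp : ∀ i, μ.real {ω | T i ω = true} = p i) (s : Finset ι) (hb : 0 < b)
    (hw : ∀ i ∈ s, 0 ≤ w i ∧ w i ≤ b) {θ : ℝ} (hθ : 0 ≤ θ) :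
    μ.real {ω | ∑ i ∈ s, w i * p i + t ≤ ∑ i ∈ s, w i * if T i ω then 1 else 0} ≤
      exp (-(θ * t) + (∑ i ∈ s, w i ^ 2 * p i) / b ^ 2 * (exp (θ * b) - 1 - θ * b)) := by
  set X : ι → Ω → ℝ := fun i ω => w i * if T i ω then 1 else 0
  have hXmeas : ∀ i, Measurable (X i) := fun i =>
    (measurable_of_finite fun β : Bool => w i * if β then (1 : ℝ) else 0).comp (hT i)
  have hXindep : iIndepFun X μ :=
    hindep.comp (fun i (β : Bool) => w i * if β then (1 : ℝ) else 0) fun _ =>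
      measurable_of_finite _
  have hint : Integrable (fun ω => exp (θ * (∑ i ∈ s, X i) ω)) μ := by
    refine integrable_exp_mul_of_le θ (∑ i ∈ s, w i) hθ
      (aemeasurable_sum s fun i _ => (hXmeas i).aemeasurable) (ae_of_all _ fun ω => ?_)
    rw [Finset.sum_apply]
    refine sum_le_sum fun i hi => ?_
    by_cases h : T i ω <;> simp [X, h, (hw i hi).1]
  have hchernoff := measure_ge_le_exp_mul_mgf (∑ i ∈ s, w i * p i + t) hθ hint
  rw [hXindep.mgf_sum hXmeas] at hchernoff
  have hmgf : ∏ i ∈ s, mgf (X i) μ θ ≤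
      exp (∑ i ∈ s, p i * (θ * w i + (w i / b) ^ 2 * (exp (θ * b) - 1 - θ * b))) := by
    rw [exp_sum]
    refine prod_le_prod (fun i _ => mgf_nonneg) fun i hi => ?_
    rw [← hp i]
    exact mgf_mul_indicator_bool_le (hT i) hb (hw i hi).1 (hw i hi).2 hθ
  have hevent : {ω | ∑ i ∈ s, w i * p i + t ≤ ∑ i ∈ s, w i * if T i ω then 1 else 0}
      = {ω | ∑ i ∈ s, w i * p i + t ≤ (∑ i ∈ s, X i) ω} := by
    simp only [Finset.sum_apply, X]
  rw [hevent]
  refine hchernoff.trans ((mul_le_mul_of_nonneg_left hmgf (exp_pos _).le).trans_eq ?_)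
  have hsum : ∑ i ∈ s, p i * (θ * w i + (w i / b) ^ 2 * (exp (θ * b) - 1 - θ * b))
      = θ * ∑ i ∈ s, w i * p i +
          (∑ i ∈ s, w i ^ 2 * p i) / b ^ 2 * (exp (θ * b) - 1 - θ * b) := by
    simp only [mul_sum, sum_div, sum_mul, ← sum_add_distrib]
    exact sum_congr rfl fun i _ => by ring
  rw [← exp_add, hsum]
  congr 1
  ring

theorem measureReal_sum_ge_le_exp_bennettH (hT : ∀ i, Measurable (T i))
    (hindep : iIndepFun T μ) (hp : ∀ i, μ.real {ω | T i ω = true} = p i) (s : Finset ι)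
    {V : ℝ} (hb : 0 < b) (hV : 0 < V) (ht : 0 < t) (hw : ∀ i ∈ s, 0 ≤ w i ∧ w i ≤ b)
    (hvar : ∑ i ∈ s, w i ^ 2 * p i ≤ V) :
    μ.real {ω | ∑ i ∈ s, w i * p i + t ≤ ∑ i ∈ s, w i * if T i ω then 1 else 0} ≤
      exp (-(V / b ^ 2 * bennettH (b * t / V))) := by
  set x := b * t / V
  have hx : 0 < x := by positivity
  -- the minimizer of the Chernoff exponent
  set θ := log (1 + x) / b
  have hθ : 0 ≤ θ := div_nonneg (log_nonneg (by linarith)) hb.le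
  have hD : 0 ≤ exp (θ * b) - 1 - θ * b := by linarith [add_one_le_exp (θ * b)]
  have hθb : θ * b = log (1 + x) := div_mul_cancel₀ _ hb.ne'
  refine (measureReal_sum_ge_le_exp hT hindep hp s hb hw hθ).trans ?_
  calc exp (-(θ * t) + (∑ i ∈ s, w i ^ 2 * p i) / b ^ 2 * (exp (θ * b) - 1 - θ * b))
      ≤ exp (-(θ * (x * V / b)) + V / b ^ 2 * (exp (θ * b) - 1 - θ * b)) := by
        rw [show x * V / b = t by simp only [x]; field_simp]
        gcongr
    _ = exp (-(V / b ^ 2 * bennettH x)) := by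
        rw [hθb, exp_log (by linarith), bennettH]
        simp only [θ]
        field_simp
        congr 1
        ring

end Bennett

section Hypergraph

variable {α : Type*}

lemma card_offDiag_le {e : Finset α} {M : ℕ} (he : e.card ≤ M) :
    (e.offDiag.card : ℝ) ≤ M * (M - 1) := by
  have h : e.offDiag.card ≤ M * (M - 1) := by
    rw [offDiag_card, ← Nat.mul_sub_one]
    exact Nat.mul_le_mul he (Nat.sub_le_sub_right he 1)
  calc (e.offDiag.card : ℝ) ≤ (M * (M - 1) : ℕ) := by exact_mod_cast h
    _ = M * (M - 1) := by obtain _ | M := M <;> simp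

lemma sum_offDiag_le_mul {e : Finset α} {M : ℕ} (he : e.card ≤ M) {f : α × α → ℝ}
    {a : ℝ} (ha : 0 ≤ a) (hf : ∀ q ∈ e.offDiag, f q ≤ a) :
    ∑ q ∈ e.offDiag, f q ≤ M * (M - 1) * a :=
  (sum_le_card_nsmul _ _ _ hf).trans (by rw [nsmul_eq_mul]; gcongr; exact card_offDiag_le he)

lemma sq_sum_offDiag_le {e : Finset α} {M : ℕ} (he : e.card ≤ M) (f : α × α → ℝ) :
    (∑ q ∈ e.offDiag, f q) ^ 2 ≤ M * (M - 1) * ∑ q ∈ e.offDiag, f q ^ 2 :=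
  sq_sum_le_card_mul_sum_sq.trans (by gcongr; exact card_offDiag_le he)

variable [DecidableEq α] [Fintype α]

lemma ite_sum_edges_eq_sum_offDiag (K : Finset ℕ) (g : Finset α → ℝ) (i j : α) :
    (if i = j then 0 else
      ∑ m ∈ K, ∑ e ∈ univ.filter (fun e : Finset α => e.card = m ∧ i ∈ e ∧ j ∈ e),
        g e)
      = ∑ e ∈ univ.filter (fun e : Finset α => e.card ∈ K),
          if (i, j) ∈ e.offDiag then g e else 0 := by
  split_ifs with hij
  · simp [hij]
  rw [← sum_filter, ← sum_fiberwise_of_maps_to (g := card) (t := K) (fun e he => by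
    simp only [mem_filter, mem_univ, true_and] at he; exact he.1)]
  refine sum_congr rfl fun m hm => sum_congr ?_ fun _ _ => rfl
  ext e
  simp only [mem_filter, mem_univ, true_and, mem_offDiag, ne_eq, hij, not_false_eq_true, and_true]
  grind

lemma sum_mul_ite_sum_edges (K : Finset ℕ) (R : α → α → ℝ) (g : Finset α → ℝ) :
    ∑ i, ∑ j, R i j * (if i = j then 0 else
      ∑ m ∈ K, ∑ e ∈ univ.filter (fun e : Finset α => e.card = m ∧ i ∈ e ∧ j ∈ e),
        g e)
      = ∑ e ∈ univ.filter (fun e : Finset α => e.card ∈ K),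
          (∑ q ∈ e.offDiag, R q.1 q.2) * g e := by
  simp_rw [ite_sum_edges_eq_sum_offDiag, ← Fintype.sum_prod_type', mul_sum, mul_ite, mul_zero]
  rw [sum_comm]
  simp_rw [sum_ite_mem, univ_inter, sum_mul]

end Hypergraph

lemma sum_mul_expAdj {n : ℕ} (M : ℕ) (R : Matrix (Fin n) (Fin n) ℝ)
    (p : Finset (Fin n) → ℝ) :
    ∑ i, ∑ j, R i j * expAdj n M p i j
      = ∑ e ∈ univ.filter (fun e : Finset (Fin n) => e.card ∈ Icc 2 M),
          (∑ q ∈ e.offDiag, R q.1 q.2) * p e := by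
  simpa only [expAdj, Matrix.of_apply] using sum_mul_ite_sum_edges (Icc 2 M) R p

lemma sum_mul_adjMatrix {n : ℕ} (M : ℕ) {Ω : Type*} (R : Matrix (Fin n) (Fin n) ℝ)
    (T : Finset (Fin n) → Ω → Bool) (ω : Ω) :
    ∑ i, ∑ j, R i j * adjMatrix n M T ω i j
      = ∑ e ∈ univ.filter (fun e : Finset (Fin n) => e.card ∈ Icc 2 M),
          (∑ q ∈ e.offDiag, R q.1 q.2) * if T e ω then 1 else 0 := by
  simpa only [adjMatrix, Matrix.of_apply] using
    sum_mul_ite_sum_edges (Icc 2 M) R fun e => if T e ω then 1 else 0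

theorem adjacency_uutp_general
    {Ω : Type*} [MeasurableSpace Ω] (μ : Measure Ω) [IsProbabilityMeasure μ]
    (n M : ℕ) (hM : 2 ≤ M)
    (T : Finset (Fin n) → Ω → Bool) (hTmeas : ∀ e, Measurable (T e))
    (hTindep : ProbabilityTheory.iIndepFun T μ)
    (p : Finset (Fin n) → ℝ) (hp0 : ∀ e, 0 ≤ p e)
    (hpT : ∀ e, μ {ω | T e ω = true} = ENNReal.ofReal (p e))
    (a t : ℝ) (ha : 0 < a) (ht : 0 < t)
    (Q : Matrix (Fin n) (Fin n) ℝ)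
    (hQ : ∀ i j, 0 ≤ Q i j ∧ Q i j ≤ a)
    (hσ : 0 < ∑ i, ∑ j, (Q i j) ^ 2 * expAdj n M p i j) :
    μ {ω | (∑ i, ∑ j, Q i j * expAdj n M p i j) + t ≤
        ∑ i, ∑ j, Q i j * adjMatrix n M T ω i j} ≤
      ENNReal.ofReal (Real.exp
        (-(((∑ i, ∑ j, (Q i j) ^ 2 * expAdj n M p i j) / (M * ((M : ℝ) - 1) * a ^ 2)) *
          bennettH (a * t / ∑ i, ∑ j, (Q i j) ^ 2 * expAdj n M p i j)))) := by
  set E := univ.filter fun e : Finset (Fin n) => e.card ∈ Icc 2 M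
  set w : Finset (Fin n) → ℝ := fun e => ∑ q ∈ e.offDiag, Q q.1 q.2
  set V := ∑ i, ∑ j, (Q i j) ^ 2 * expAdj n M p i j
  set K : ℝ := M * (M - 1)
  have hK : 0 < K := by
    have : (2 : ℝ) ≤ M := by exact_mod_cast hM
    simp only [K]; nlinarith
  have hp : ∀ e, μ.real {ω | T e ω = true} = p e := fun e => by
    rw [measureReal_def, hpT, ENNReal.toReal_ofReal (hp0 e)]
  have hcard : ∀ e ∈ E, e.card ≤ M := fun e he => (mem_Icc.1 (mem_filter.1 he).2).2
  have hw : ∀ e ∈ E, 0 ≤ w e ∧ w e ≤ K * a := fun e he =>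
    ⟨sum_nonneg fun q _ => (hQ _ _).1,
      sum_offDiag_le_mul (hcard e he) ha.le fun q _ => (hQ _ _).2⟩
  have hvar : ∑ e ∈ E, w e ^ 2 * p e ≤ K * V := by
    rw [show V = _ from sum_mul_expAdj M (fun i j => Q i j ^ 2) p, mul_sum]
    refine sum_le_sum fun e he => ?_
    rw [← mul_assoc]
    exact mul_le_mul_of_nonneg_right (sq_sum_offDiag_le (hcard e he) _) (hp0 e)
  have hevent : {ω | ∑ i, ∑ j, Q i j * expAdj n M p i j + t ≤
      ∑ i, ∑ j, Q i j * adjMatrix n M T ω i j} =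
      {ω | ∑ e ∈ E, w e * p e + t ≤ ∑ e ∈ E, w e * if T e ω then 1 else 0} := by
    simp only [sum_mul_expAdj, sum_mul_adjMatrix, E, w]
  rw [hevent, ← ofReal_measureReal]
  refine ENNReal.ofReal_le_ofReal ((measureReal_sum_ge_le_exp_bennettH hTmeas hTindep hp E
    (mul_pos hK ha) (mul_pos hK hσ) ht hw hvar).trans_eq ?_)
  rw [show K * a * t / (K * V) = a * t / V by field_simp]
  congr 3
  field_simp

/-- The adjacency matrix of a random non-uniform hypergraph satisfies the uniform
upper tail property `UUTP(1/(M(M-1)), 0)`. -/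
theorem adjacency_uutp
    {Ω : Type*} [MeasurableSpace Ω] (μ : Measure Ω) [IsProbabilityMeasure μ]
    (n M : ℕ) (hn : 2 ≤ n) (hM : 2 ≤ M)
    (T : Finset (Fin n) → Ω → Bool) (hTmeas : ∀ e, Measurable (T e))
    (hTindep : ProbabilityTheory.iIndepFun T μ)
    (p : Finset (Fin n) → ℝ) (hp0 : ∀ e, 0 ≤ p e)
    (hpT : ∀ e, μ {ω | T e ω = true} = ENNReal.ofReal (p e))
    (dm : ℕ → ℝ) (hdm : ∀ m, 0 ≤ dm m)
    (hpbound : ∀ e : Finset (Fin n), e.card ∈ Finset.Icc 2 M →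
      p e ≤ dm e.card / (n.choose (e.card - 1)))
    (a t : ℝ) (ha : 0 < a) (ht : 0 < t)
    (Q : Matrix (Fin n) (Fin n) ℝ) (hQsymm : Q.IsSymm)
    (hQ : ∀ i j, 0 ≤ Q i j ∧ Q i j ≤ a)
    (hσ : 0 < ∑ i, ∑ j, (Q i j) ^ 2 * expAdj n M p i j) :
    μ {ω | (∑ i, ∑ j, Q i j * expAdj n M p i j) + t ≤
        ∑ i, ∑ j, Q i j * adjMatrix n M T ω i j} ≤
      ENNReal.ofReal (Real.exp
        (-(((∑ i, ∑ j, (Q i j) ^ 2 * expAdj n M p i j) / (M * ((M : ℝ) - 1) * a ^ 2)) *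
          bennettH (a * t / ∑ i, ∑ j, (Q i j) ^ 2 * expAdj n M p i j)))) :=
  adjacency_uutp_general μ n M hM T hTmeas hTindep p hp0 hpT a t ha ht Q hQ hσ
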